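/- arXiv:1806.06362 — 5 statements merged into one kernel-verified Lean document; each statement's English description precedes it below -/
import Mathlib

section
/- Let h be a real random variable with law N(0, σ²), σ > 0. Then the law of max(h, 0)² is the mixture (1/2)·δ_0 + (1/2)·μ, where δ_0 is the Dirac measure at 0 and μ is the pushforward of the Gamma distribution with shape 1/2 and rate 1/2 (i.e. the chi-squared distribution with 1 degree of freedom) under the map t ↦ σ² t. -/
/-!
The function `max(h, 0)²` vanishes on `{h ≤ 0}`, which has probability `1/2` by the symmetry of
`N(0, σ²)`, and equals `h²` on `{h > 0}`. On the half-line the substitution `t = u² / σ²` turns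
twice the Gaussian density into the chi-squared density with one degree of freedom, the constants
matching because `Γ(1/2) = √π`.
-/

open MeasureTheory ProbabilityTheory Real Set Filter
open scoped NNReal ENNReal

theorem map_withDensity_abs_deriv_mul {s : Set ℝ} {f f' : ℝ → ℝ} (hs : MeasurableSet s)
    (hf' : ∀ x ∈ s, HasDerivWithinAt f (f' x) s x) (hf : InjOn f s) (hfm : Measurable f)
    (g : ℝ → ℝ≥0∞) :
    ((volume.restrict s).withDensity fun x => ENNReal.ofReal |f' x| * g (f x)).map f =
      (volume.restrict (f '' s)).withDensity g := by
  ext t ht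
  have hst : MeasurableSet (s ∩ f ⁻¹' t) := hs.inter (hfm ht)
  rw [Measure.map_apply hfm ht, withDensity_apply' _, withDensity_apply' _,
    Measure.restrict_restrict' hs, Measure.restrict_restrict ht, inter_comm t, inter_comm _ s,
    ← image_inter_preimage, lintegral_image_eq_lintegral_abs_deriv_mul hst
      (fun x hx => (hf' x hx.1).mono inter_subset_left) (hf.mono inter_subset_left)]

theorem gammaMeasure_eq_withDensity_restrict_Ioi (a r : ℝ) :
    gammaMeasure a r = (volume.restrict (Ioi 0)).withDensity (gammaPDF a r) := by
  have hind : (Ici (0 : ℝ)).indicator (gammaPDF a r) = gammaPDF a r :=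
    indicator_eq_self.mpr fun _ hx => not_lt.mp fun hneg => hx (gammaPDF_of_neg hneg)
  conv_lhs => rw [gammaMeasure, ← hind]
  rw [withDensity_indicator measurableSet_Ici, Measure.restrict_congr_set Ioi_ae_eq_Ici]

theorem gaussianReal_Iic_zero {v : ℝ≥0} (hv : v ≠ 0) : gaussianReal 0 v (Iic 0) = 1 / 2 := by
  have := nullSingletonClass_gaussianReal (μ := 0) hv
  have hsymm : gaussianReal 0 v (Ioi 0) = gaussianReal 0 v (Iic 0) := by
    conv_lhs => rw [← neg_zero, ← gaussianReal_map_neg]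
    rw [Measure.map_apply measurable_neg measurableSet_Ioi, measure_congr Iio_ae_eq_Iic.symm]
    congr 1; ext; simp
  have htotal := measure_add_measure_compl (μ := gaussianReal 0 v) (measurableSet_Iic (a := 0))
  rw [compl_Iic, hsymm, measure_univ, ← two_mul] at htotal
  rw [ENNReal.eq_div_iff two_ne_zero ENNReal.ofNat_ne_top, htotal]

theorem map_sq_relu (μ : Measure ℝ) :
    μ.map (fun x => max x 0 ^ 2) =
      μ (Iic 0) • Measure.dirac 0 + (μ.restrict (Ioi 0)).map (· ^ 2) := by
  have hmeas : Measurable (fun x : ℝ => max x 0 ^ 2) := by fun_prop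
  conv_lhs =>
    rw [← Measure.restrict_add_restrict_compl (μ := μ) (measurableSet_Iic (a := 0)), compl_Iic]
  rw [Measure.map_add _ _ hmeas]
  congr 1
  · rw [Measure.map_congr (g := fun _ => (0 : ℝ)), Measure.map_const, Measure.restrict_apply_univ]
    filter_upwards [ae_restrict_mem measurableSet_Iic] with x hx
    simp [max_eq_right (mem_Iic.mp hx)]
  · refine Measure.map_congr ?_
    filter_upwards [ae_restrict_mem measurableSet_Ioi] with x hx
    simp [max_eq_left (mem_Ioi.mp hx).le]

theorem two_mul_gaussianPDFReal_eq_gammaPDFReal_sq_div {v : ℝ≥0} (hv : v ≠ 0) {u : ℝ}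
    (hu : 0 < u) :
    2 * gaussianPDFReal 0 v u = 2 * u / v * gammaPDFReal (1 / 2) (1 / 2) (u ^ 2 / v) := by
  have hv' : (0 : ℝ) < v := NNReal.coe_pos.mpr (pos_iff_ne_zero.mpr hv)
  have hpow : (u ^ 2 / v) ^ ((1 : ℝ) / 2 - 1) = √v / u := by
    rw [show (1 : ℝ) / 2 - 1 = -(1 / 2) by norm_num, rpow_neg (by positivity), ← sqrt_eq_rpow,
      sqrt_div (sq_nonneg u), sqrt_sq hu.le, inv_div]
  have hrate : ((1 : ℝ) / 2) ^ ((1 : ℝ) / 2) = (√2)⁻¹ := by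
    rw [← sqrt_eq_rpow, one_div, sqrt_inv]
  have hexp : -(1 / 2 * (u ^ 2 / v)) = -(u - 0) ^ 2 / (2 * v) := by
    field_simp; ring
  rw [gammaPDFReal, if_pos (by positivity), gaussianPDFReal, Gamma_one_half_eq, hpow, hrate, hexp,
    sqrt_mul (by positivity), sqrt_mul zero_le_two]
  have : √π ≠ 0 := by positivity
  have : √(v : ℝ) ≠ 0 := by positivity
  field_simp
  rw [sq_sqrt hv'.le]

theorem image_sq_div_Ioi {c : ℝ} (hc : 0 < c) : (fun u : ℝ => u ^ 2 / c) '' Ioi 0 = Ioi 0 := by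
  ext t
  constructor
  · rintro ⟨u, hu, rfl⟩
    exact div_pos (pow_pos hu 2) hc
  · intro ht
    refine ⟨√(c * t), sqrt_pos.mpr (mul_pos hc ht), ?_⟩
    simp only
    rw [sq_sqrt (mul_pos hc ht).le, mul_div_cancel_left₀ t hc.ne']

theorem map_sq_restrict_Ioi_gaussianReal {v : ℝ≥0} (hv : v ≠ 0) :
    ((gaussianReal 0 v).restrict (Ioi 0)).map (· ^ 2) =
      (1 / 2 : ℝ≥0∞) • (gammaMeasure (1 / 2) (1 / 2)).map ((v : ℝ) * ·) := by
  have hv' : (0 : ℝ) < v := NNReal.coe_pos.mpr (pos_iff_ne_zero.mpr hv)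
  have hf : Measurable fun u : ℝ => u ^ 2 / v := by fun_prop
  have hderiv : ∀ u ∈ Ioi (0 : ℝ),
      HasDerivWithinAt (fun u : ℝ => u ^ 2 / v) (2 * u / v) (Ioi 0) u :=
    fun u _ => by simpa using ((hasDerivAt_pow 2 u).div_const (v : ℝ)).hasDerivWithinAt
  have hinj : InjOn (fun u : ℝ => u ^ 2 / v) (Ioi 0) := fun u hu w hw huw =>
    (pow_left_inj₀ (le_of_lt hu) (le_of_lt hw) two_ne_zero).mp ((div_left_inj' hv'.ne').mp huw)
  have hgamma : gammaMeasure (1 / 2) (1 / 2) =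
      ((2 : ℝ≥0∞) • (gaussianReal 0 v).restrict (Ioi 0)).map (fun u : ℝ => u ^ 2 / v) := by
    conv_lhs => rw [gammaMeasure_eq_withDensity_restrict_Ioi, ← image_sq_div_Ioi hv']
    rw [← map_withDensity_abs_deriv_mul measurableSet_Ioi hderiv hinj hf,
      gaussianReal_of_var_ne_zero _ hv, restrict_withDensity measurableSet_Ioi,
      ← withDensity_smul _ (measurable_gaussianPDF _ _)]
    congr 1
    refine withDensity_congr_ae ?_
    filter_upwards [ae_restrict_mem measurableSet_Ioi] with u (hu : 0 < u)
    rw [Pi.smul_apply, smul_eq_mul, gaussianPDF, gammaPDF, abs_of_pos (by positivity),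
      ← ENNReal.ofReal_ofNat 2, ← ENNReal.ofReal_mul zero_le_two,
      ← ENNReal.ofReal_mul (by positivity), two_mul_gaussianPDFReal_eq_gammaPDFReal_sq_div hv hu]
  rw [hgamma, Measure.map_map (by fun_prop) hf, Measure.map_smul, smul_smul]
  have h2 : (1 / 2 : ℝ≥0∞) * 2 = 1 := ENNReal.div_mul_cancel two_ne_zero ENNReal.ofNat_ne_top
  rw [h2, one_smul]
  congr 1
  ext u
  simp [mul_div_cancel₀ _ hv'.ne']

theorem squared_relu_of_gaussian_law_general
    {Ω : Type*} [MeasureSpace Ω]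
    (σ : ℝ≥0) (hσ : 0 < σ) (h : Ω → ℝ) (h_meas : Measurable h)
    (h_law : Measure.map h ℙ = gaussianReal 0 (σ ^ 2)) :
    Measure.map (fun ω => max (h ω) 0 ^ 2) ℙ
      = (1 / 2 : ℝ≥0∞) • Measure.dirac (0 : ℝ)
        + (1 / 2 : ℝ≥0∞) • Measure.map (fun t => (σ : ℝ) ^ 2 * t)
            (gammaMeasure (1 / 2) (1 / 2)) := by
  have hv : σ ^ 2 ≠ 0 := pow_ne_zero 2 hσ.ne'
  change Measure.map ((fun x : ℝ => max x 0 ^ 2) ∘ h) ℙ = _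
  rw [← Measure.map_map (by fun_prop) h_meas, h_law, map_sq_relu, gaussianReal_Iic_zero hv,
    map_sq_restrict_Ioi_gaussianReal hv, NNReal.coe_pow]

/-- For `h ~ N(0, σ²)` with `σ > 0`, the squared ReLU output `max(h, 0)²` has
law `(1/2)·δ₀ + (1/2)·μ`, where `μ` is the pushforward of the chi-squared
distribution with one degree of freedom (the Gamma distribution with shape
`1/2` and rate `1/2`) under `t ↦ σ² t`. -/
theorem squared_relu_of_gaussian_law
    {Ω : Type*} [MeasureSpace Ω] [IsProbabilityMeasure (ℙ : Measure Ω)]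
    (σ : ℝ≥0) (hσ : 0 < σ) (h : Ω → ℝ) (h_meas : Measurable h)
    (h_law : Measure.map h ℙ = gaussianReal 0 (σ ^ 2)) :
    Measure.map (fun ω => max (h ω) 0 ^ 2) ℙ
      = (1 / 2 : ℝ≥0∞) • Measure.dirac (0 : ℝ)
        + (1 / 2 : ℝ≥0∞) • Measure.map (fun t => (σ : ℝ) ^ 2 * t)
            (gammaMeasure (1 / 2) (1 / 2)) :=
  squared_relu_of_gaussian_law_general σ hσ h h_meas h_law
end

section
/- Let σ > 0, z > 0, k ≥ 1 an integer, and m ∈ ℝ with m < k/2 − 1. Let p_{χ²_k}(t) = t^{k/2−1} e^{−t/2} / (2^{k/2} Γ(k/2)) be the chi-squared density with k degrees of freedom. Then ∫_0^∞ y^m · (1/(σ² y)) · p_{χ²_k}(z/(σ² y)) dy = 2^{−(m+1)} σ^{−2m−2} · (Γ(k/2 − m − 1)/Γ(k/2)) · z^m. -/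
open MeasureTheory

/-- The density of the chi-squared distribution with `k` degrees of freedom:
`p_{χ²_k}(t) = t^(k/2−1) e^(−t/2) / (2^(k/2) Γ(k/2))`. -/
noncomputable def chiSqPDF (k : ℕ) (t : ℝ) : ℝ :=
  t ^ ((k : ℝ) / 2 - 1) * Real.exp (-t / 2)
    / ((2 : ℝ) ^ ((k : ℝ) / 2) * Real.Gamma ((k : ℝ) / 2))

/-- For `σ > 0`, `z > 0`, an integer `k ≥ 1` and `m < k/2 − 1`,
`∫_0^∞ y^m (1/(σ² y)) p_{χ²_k}(z/(σ² y)) dy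
  = 2^{−(m+1)} σ^{−2m−2} (Γ(k/2 − m − 1)/Γ(k/2)) z^m`. -/
theorem scaled_chiSq_kernel_power_integral
    (σ z : ℝ) (hσ : 0 < σ) (hz : 0 < z) (k : ℕ) (hk : 1 ≤ k) (m : ℝ)
    (hm : m < (k : ℝ) / 2 - 1) :
    ∫ y in Set.Ioi (0 : ℝ),
        y ^ m * (1 / (σ ^ 2 * y)) * chiSqPDF k (z / (σ ^ 2 * y))
      = (2 : ℝ) ^ (-(m + 1)) * σ ^ (-2 * m - 2)
          * (Real.Gamma ((k : ℝ) / 2 - m - 1) / Real.Gamma ((k : ℝ) / 2))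
          * z ^ m := by
  have hσ2 : (0:ℝ) < σ ^ 2 := by positivity
  set s : ℝ := (k : ℝ) / 2 - m - 1 with hs
  have hs0 : 0 < s := by simp only [hs]; linarith
  set b : ℝ := z / (2 * σ ^ 2) with hb
  have hb0 : 0 < b := by positivity
  set A : ℝ := (z / σ ^ 2) ^ ((k:ℝ)/2 - 1) / σ ^ 2
      / ((2 : ℝ) ^ ((k : ℝ) / 2) * Real.Gamma ((k : ℝ) / 2)) with hA
  set g : ℝ → ℝ := fun t => t ^ (s - 1) * Real.exp (-b * t ^ (1:ℝ)) * A with hg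
  have key : ∫ y in Set.Ioi (0 : ℝ),
      y ^ m * (1 / (σ ^ 2 * y)) * chiSqPDF k (z / (σ ^ 2 * y))
      = ∫ t in Set.Ioi (0:ℝ), g t := by
    rw [← integral_comp_rpow_Ioi g (p := (-1:ℝ)) (by norm_num)]
    refine setIntegral_congr_fun measurableSet_Ioi (fun y hy => ?_)
    have hy : (0:ℝ) < y := hy
    simp only [hg, chiSqPDF, smul_eq_mul]
    rw [Real.rpow_neg_one, Real.rpow_one]
    have h1 : z / (σ ^ 2 * y) = (z / σ ^ 2) * y⁻¹ := by field_simp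
    rw [h1, Real.mul_rpow (by positivity) (by positivity),
      Real.inv_rpow hy.le, Real.inv_rpow hy.le]
    have h2 : -((z / σ ^ 2) * y⁻¹) / 2 = -b * y⁻¹ := by
      rw [hb]; field_simp
    rw [h2, show |(-1:ℝ)| = 1 by norm_num, hA,
      ← Real.rpow_neg hy.le, ← Real.rpow_neg hy.le]
    have e1 : y ^ (-(s-1)) = y ^ m * y ^ (-((k:ℝ)/2 - 1)) * y := by
      have : y ^ (-(s-1)) = y ^ (m + -((k:ℝ)/2 - 1) + 1) := by
        congr 1; simp only [hs]; ring
      rw [this, Real.rpow_add hy, Real.rpow_add hy, Real.rpow_one]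
    have e2 : y ^ (-1 - 1 : ℝ) = (y ^ 2)⁻¹ := by
      rw [show (-1 - 1 : ℝ) = -((2:ℕ):ℝ) by norm_num, Real.rpow_neg hy.le,
        Real.rpow_natCast]
    rw [e1, e2]
    field_simp
  rw [key]
  rw [hg]
  rw [MeasureTheory.integral_mul_const]
  rw [integral_rpow_mul_exp_neg_mul_rpow one_pos (by linarith : (-1:ℝ) < s - 1) hb0]
  have hexp : -(s - 1 + 1) / 1 = -s := by ring
  have hexp2 : (s - 1 + 1) / 1 = s := by ring
  rw [hexp, hexp2]
  have hzs : z ^ s ≠ 0 := (Real.rpow_pos_of_pos hz _).ne'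
  have h2s : (2:ℝ) ^ s ≠ 0 := (Real.rpow_pos_of_pos two_pos _).ne'
  have hσs : σ ^ (2*s) ≠ 0 := (Real.rpow_pos_of_pos hσ _).ne'
  have ebz : b ^ (-s) = z ^ (-s) * (2:ℝ) ^ s * σ ^ (2*s) := by
    rw [hb, Real.rpow_neg hb0.le, Real.div_rpow hz.le (by positivity),
      Real.mul_rpow (by norm_num) hσ2.le, ← Real.rpow_natCast σ 2,
      ← Real.rpow_mul hσ.le, show ((2:ℕ):ℝ) * s = 2*s by push_cast; ring,
      Real.rpow_neg hz.le]
    field_simp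
  have eA : (z/σ^2) ^ ((k:ℝ)/2 - 1) = z ^ ((k:ℝ)/2-1) * σ ^ (-2*((k:ℝ)/2-1)) := by
    rw [Real.div_rpow hz.le hσ2.le, ← Real.rpow_natCast σ 2, ← Real.rpow_mul hσ.le,
      div_eq_mul_inv, ← Real.rpow_neg hσ.le]
    push_cast
    ring_nf
  have eσ2 : (σ^2:ℝ) = σ ^ (2:ℝ) := by
    rw [← Real.rpow_natCast σ 2]; norm_num
  rw [ebz, hA, eA, eσ2]
  have hz1 : z ^ (-s) * z ^ ((k:ℝ)/2 - 1) = z ^ m := by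
    rw [← Real.rpow_add hz]; congr 1; simp only [hs]; ring
  have h21 : (2:ℝ) ^ s / (2:ℝ) ^ ((k:ℝ)/2) = (2:ℝ) ^ (-(m+1)) := by
    rw [← Real.rpow_sub two_pos]; congr 1; simp only [hs]; ring
  have hσ1 : σ ^ (2*s) * σ ^ (-2*((k:ℝ)/2-1)) / σ ^ (2:ℝ) = σ ^ (-2*m-2) := by
    rw [← Real.rpow_add hσ, ← Real.rpow_sub hσ]; congr 1; simp only [hs]; ring
  have hΓ : Real.Gamma ((k:ℝ)/2) ≠ 0 := by
    have : (0:ℝ) < (k:ℝ)/2 := by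
      have : (1:ℝ) ≤ (k:ℝ) := by exact_mod_cast hk
      linarith
    exact (Real.Gamma_pos_of_pos this).ne'
  rw [← hz1, ← h21, ← hσ1]
  have h2k : ((2:ℝ) ^ ((k:ℝ)/2)) ≠ 0 := (Real.rpow_pos_of_pos two_pos _).ne'
  have hσr : σ ^ (2:ℝ) ≠ 0 := (Real.rpow_pos_of_pos hσ _).ne'
  field_simp
end

section
/- Fix an integer N ≥ 1, σ_w > 0, and m ∈ ℝ with m < −1/2. Define the ReLU transition kernel density for y, z > 0 by k(y, z) = 2^{−N} ∑_{k=1}^N (N choose k) (1/(σ_w² y)) p_{χ²_k}(z/(σ_w² y)), where p_{χ²_k}(t) = t^{k/2−1} e^{−t/2} / (2^{k/2} Γ(k/2)). Then for every z > 0, ∫_0^∞ k(y, z) y^m dy = λ_m z^m, where λ_m = 2^{−(N+m+1)} σ_w^{−2m−2} ∑_{k=1}^N (N choose k) Γ(k/2 − m − 1)/Γ(k/2). That is, the power functions y ↦ y^m on (0, ∞) are eigenfunctions of the layer transition operator T with σ_b = 0, with eigenvalue λ_m. -/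
open MeasureTheory

/-- The ReLU layer transition kernel density with `σ_b = 0`:
`k(y, z) = 2^{−N} ∑_{k=1}^N (N choose k) (1/(σw² y)) p_{χ²_k}(z/(σw² y))`. -/
noncomputable def reluKernel (N : ℕ) (σw y z : ℝ) : ℝ :=
  (2 : ℝ)⁻¹ ^ N * ∑ k ∈ Finset.Icc 1 N,
    (N.choose k : ℝ) * (1 / (σw ^ 2 * y)) * chiSqPDF k (z / (σw ^ 2 * y))

/-!
The kernel is of scale type: `k(y, z) = (c y)⁻¹ G(z / (c y))` with `c = σw²` and `G` the density
of `∑ max(h_i, 0)²` for i.i.d. standard normal `h_i`. The substitution `t = z / (c y)` turns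
`∫ k(y, z) y^m dy` into `c⁻¹ (z / c)^m ∫ t^(-m-1) G(t) dt`, and the remaining integral is a binomial
mixture of chi-squared moments `E[X^r] = 2^r Γ(k/2 + r) / Γ(k/2)`, finite as soon as `k/2 + r > 0`.
-/

open Real Set

lemma integral_Ioi_rpow_smul_comp_div {E : Type*} [NormedAddCommGroup E] [NormedSpace ℝ E]
    (g : ℝ → E) (m : ℝ) {a : ℝ} (ha : 0 < a) :
    ∫ y in Ioi 0, y ^ m • g (a / y) = a ^ (m + 1) • ∫ t in Ioi 0, t ^ (-m - 2) • g t := by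
  have scale := integral_comp_mul_left_Ioi (fun u => u ^ (-m - 2) • g u) 0 ha
  rw [mul_zero] at scale
  rw [← integral_comp_rpow_Ioi (fun y => y ^ m • g (a / y)) (p := -1) (by norm_num),
    show a ^ (m + 1) = a ^ (m + 2) * a⁻¹ by rw [← rpow_neg_one, ← rpow_add ha]; ring_nf,
    mul_smul, ← scale, ← integral_smul]
  refine setIntegral_congr_fun measurableSet_Ioi fun x (hx : 0 < x) => ?_
  simp only [smul_smul, rpow_neg_one, div_inv_eq_mul]
  congr 1
  rw [abs_neg, abs_one, one_mul, inv_rpow hx.le, ← rpow_neg hx.le, ← rpow_add hx,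
    mul_rpow ha.le hx.le, ← mul_assoc, ← rpow_add ha, show m + 2 + (-m - 2) = 0 by ring,
    rpow_zero, one_mul]
  ring_nf

lemma rpow_mul_chiSqPDF (k : ℕ) (r : ℝ) {t : ℝ} (ht : 0 < t) :
    t ^ r * chiSqPDF k t = (2 ^ ((k : ℝ) / 2) * Gamma ((k : ℝ) / 2))⁻¹
      * (t ^ ((k : ℝ) / 2 + r - 1) * exp (-(2⁻¹ * t))) := by
  rw [chiSqPDF, show (k : ℝ) / 2 + r - 1 = r + ((k : ℝ) / 2 - 1) by ring, rpow_add ht,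
    show -t / 2 = -(2⁻¹ * t) by ring]
  ring

lemma integrableOn_rpow_mul_chiSqPDF (k : ℕ) {r : ℝ} (hr : 0 < (k : ℝ) / 2 + r) :
    IntegrableOn (fun t => t ^ r * chiSqPDF k t) (Ioi 0) := by
  have hGamma := integrableOn_rpow_mul_exp_neg_mul_rpow (s := (k : ℝ) / 2 + r - 1) (p := 1)
    (by linarith) one_pos (inv_pos.2 two_pos)
  refine IntegrableOn.congr_fun (hGamma.const_mul (2 ^ ((k : ℝ) / 2) * Gamma ((k : ℝ) / 2))⁻¹)
    (fun t (ht : 0 < t) => ?_) measurableSet_Ioi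
  rw [rpow_mul_chiSqPDF k r ht, rpow_one, neg_mul]

lemma integral_rpow_mul_chiSqPDF (k : ℕ) {r : ℝ} (hr : 0 < (k : ℝ) / 2 + r) :
    ∫ t in Ioi 0, t ^ r * chiSqPDF k t
      = 2 ^ r * Gamma ((k : ℝ) / 2 + r) / Gamma ((k : ℝ) / 2) := by
  rw [setIntegral_congr_fun measurableSet_Ioi fun t (ht : 0 < t) => rpow_mul_chiSqPDF k r ht,
    integral_const_mul, integral_rpow_mul_exp_neg_mul_Ioi hr (inv_pos.2 two_pos), one_div, inv_inv,
    rpow_add two_pos]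
  field_simp

lemma integral_inv_mul_comp_div_mul_rpow (G : ℝ → ℝ) (m : ℝ) {c z : ℝ} (hc : 0 < c)
    (hz : 0 < z) :
    ∫ y in Ioi 0, (c * y)⁻¹ * G (z / (c * y)) * y ^ m
      = c⁻¹ * (z / c) ^ m * ∫ t in Ioi 0, t ^ (-m - 1) * G t := by
  have hsub := integral_Ioi_rpow_smul_comp_div G (m - 1) (div_pos hz hc)
  simp only [smul_eq_mul, sub_add_cancel, show -(m - 1) - 2 = -m - 1 by ring] at hsub
  rw [mul_assoc, ← hsub, ← integral_const_mul]
  refine setIntegral_congr_fun measurableSet_Ioi fun y (hy : 0 < y) => ?_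
  rw [rpow_sub_one hy.ne', div_div, mul_inv]
  ring

-- Exactly `k` of the `N` neurons are active with probability `(N choose k) 2^{-N}`, and then the
-- squared norm is `χ²_k`; the atom at `0` (no active neuron) carries no density.
noncomputable def reluSqNormPDF (N : ℕ) (t : ℝ) : ℝ :=
  (2 : ℝ)⁻¹ ^ N * ∑ k ∈ Finset.Icc 1 N, (N.choose k : ℝ) * chiSqPDF k t

lemma reluKernel_eq (N : ℕ) (σw y z : ℝ) :
    reluKernel N σw y z = (σw ^ 2 * y)⁻¹ * reluSqNormPDF N (z / (σw ^ 2 * y)) := by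
  simp only [reluKernel, reluSqNormPDF, Finset.mul_sum]
  exact Finset.sum_congr rfl fun k _ => by ring

lemma integral_rpow_mul_reluSqNormPDF (N : ℕ) {r : ℝ} (hr : -(1 / 2) < r) :
    ∫ t in Ioi 0, t ^ r * reluSqNormPDF N t
      = (2 : ℝ)⁻¹ ^ N * 2 ^ r
        * ∑ k ∈ Finset.Icc 1 N,
            (N.choose k : ℝ) * (Gamma ((k : ℝ) / 2 + r) / Gamma ((k : ℝ) / 2)) := by
  have hk : ∀ k ∈ Finset.Icc 1 N, 0 < (k : ℝ) / 2 + r := fun k hk => by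
    have : (1 : ℝ) ≤ k := by exact_mod_cast (Finset.mem_Icc.1 hk).1
    linarith
  have hterms : ∀ t, t ^ r * reluSqNormPDF N t
      = ∑ k ∈ Finset.Icc 1 N, (2 : ℝ)⁻¹ ^ N * N.choose k * (t ^ r * chiSqPDF k t) := fun t => by
    simp only [reluSqNormPDF, Finset.mul_sum]
    exact Finset.sum_congr rfl fun k _ => by ring
  simp_rw [hterms]
  rw [integral_finsetSum _ fun k hk' => (integrableOn_rpow_mul_chiSqPDF k (hk k hk')).const_mul _,
    Finset.mul_sum]
  refine Finset.sum_congr rfl fun k hk' => ?_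
  rw [integral_const_mul, integral_rpow_mul_chiSqPDF k (hk k hk')]
  ring

theorem reluKernel_power_eigenfunction_general
    (N : ℕ) (σw : ℝ) (hσw : 0 < σw) (m : ℝ) (hm : m < -(1 / 2)) :
    ∀ z : ℝ, 0 < z →
      ∫ y in Set.Ioi (0 : ℝ), reluKernel N σw y z * y ^ m
        = ((2 : ℝ) ^ (-((N : ℝ) + m + 1)) * σw ^ (-2 * m - 2)
            * ∑ k ∈ Finset.Icc 1 N,
                (N.choose k : ℝ)
                  * (Real.Gamma ((k : ℝ) / 2 - m - 1) / Real.Gamma ((k : ℝ) / 2)))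
          * z ^ m := by
  intro z hz
  have hσw2 : 0 < σw ^ 2 := by positivity
  have hpow2 : (2 : ℝ)⁻¹ ^ N * 2 ^ (-m - 1) = 2 ^ (-((N : ℝ) + m + 1)) := by
    rw [inv_pow, ← rpow_natCast, ← rpow_neg zero_le_two, ← rpow_add two_pos]
    ring_nf
  have hpowσ : (σw ^ 2)⁻¹ / (σw ^ 2) ^ m = σw ^ (-2 * m - 2) := by
    rw [← rpow_natCast, ← rpow_neg_one, ← rpow_mul hσw.le, ← rpow_mul hσw.le, ← rpow_sub hσw]
    ring_nf
  have hscalar : (σw ^ 2)⁻¹ * (z / σw ^ 2) ^ m * ((2 : ℝ)⁻¹ ^ N * 2 ^ (-m - 1))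
      = (2 : ℝ) ^ (-((N : ℝ) + m + 1)) * σw ^ (-2 * m - 2) * z ^ m := by
    rw [hpow2, ← hpowσ, div_rpow hz.le hσw2.le]
    ring
  simp_rw [reluKernel_eq]
  rw [integral_inv_mul_comp_div_mul_rpow _ m hσw2 hz,
    integral_rpow_mul_reluSqNormPDF N (by linarith)]
  simp_rw [show ∀ k : ℝ, k / 2 + (-m - 1) = k / 2 - m - 1 from fun k => by ring]
  rw [← mul_assoc, hscalar]
  ring

/-- For `N ≥ 1`, `σw > 0` and `m < −1/2`, the power functions `y ↦ y^m` are
eigenfunctions of the ReLU layer transition operator with `σ_b = 0`: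
for every `z > 0`, `∫_0^∞ k(y, z) y^m dy = λ_m z^m` with
`λ_m = 2^{−(N+m+1)} σw^{−2m−2} ∑_{k=1}^N (N choose k) Γ(k/2−m−1)/Γ(k/2)`. -/
theorem reluKernel_power_eigenfunction
    (N : ℕ) (hN : 1 ≤ N) (σw : ℝ) (hσw : 0 < σw) (m : ℝ) (hm : m < -(1 / 2)) :
    ∀ z : ℝ, 0 < z →
      ∫ y in Set.Ioi (0 : ℝ), reluKernel N σw y z * y ^ m
        = ((2 : ℝ) ^ (-((N : ℝ) + m + 1)) * σw ^ (-2 * m - 2)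
            * ∑ k ∈ Finset.Icc 1 N,
                (N.choose k : ℝ)
                  * (Real.Gamma ((k : ℝ) / 2 - m - 1) / Real.Gamma ((k : ℝ) / 2)))
          * z ^ m :=
  reluKernel_power_eigenfunction_general N σw hσw m hm
end

section
/- Let h be a real random variable with law N(0, σ²), σ ≥ 0. Then the variance of max(h, 0) equals ((π − 1)/(2π)) σ². -/
/-!
Since `max (σ x) 0 = σ max x 0` for `σ ≥ 0` and `N(0, σ²)` is the image of `N(0, 1)` under
`x ↦ σ x`, it suffices to treat `σ = 1`. There, `max(x, 0)² + max(-x, 0)² = x²` and the symmetry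
of `N(0, 1)` give `E[max(Z, 0)²] = E[Z²] / 2 = 1 / 2`, while `E[max(Z, 0)] = ∫₀^∞ x φ(x) dx = φ(0)`,
so the variance is `1 / 2 - 1 / (2π)`.
-/

open MeasureTheory ProbabilityTheory Real Set
open scoped NNReal

lemma integral_Ioi_mul_exp_neg_mul_sq {b : ℝ} (hb : 0 < b) :
    ∫ x in Ioi (0 : ℝ), x * exp (-b * x ^ 2) = (2 * b)⁻¹ := by
  have := integral_rpow_mul_exp_neg_mul_rpow two_pos (by norm_num : (-1 : ℝ) < 1) hb
  norm_num [rpow_neg_one] at this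
  simp_rw [neg_mul, this, mul_inv, mul_comm, one_div]

lemma integral_max_zero_sq_of_map_neg {μ : Measure ℝ} (hμ : μ.map (fun x ↦ -x) = μ)
    (hint : Integrable (fun x ↦ x ^ 2) μ) :
    ∫ x, max x 0 ^ 2 ∂μ = (∫ x, x ^ 2 ∂μ) / 2 := by
  have hsplit : (fun x : ℝ ↦ x ^ 2) = fun x ↦ max x 0 ^ 2 + max (-x) 0 ^ 2 := by
    ext x
    rcases le_total x 0 with hx | hx <;> simp [hx]
  have hint_pos : Integrable (fun x ↦ max x 0 ^ 2) μ :=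
    hint.mono' (by fun_prop) (ae_of_all _ fun x ↦ by simp [congrFun hsplit x])
  have hint_neg : Integrable (fun x ↦ max (-x) 0 ^ 2) μ := by
    rw [← hμ] at hint_pos
    exact (integrable_map_measure (by fun_prop) (by fun_prop)).1 hint_pos
  have hreflect : ∫ x, max (-x) 0 ^ 2 ∂μ = ∫ x, max x 0 ^ 2 ∂μ := by
    conv_rhs => rw [← hμ]
    rw [integral_map (by fun_prop) (by fun_prop)]
  rw [hsplit, integral_add hint_pos hint_neg, hreflect]
  ring

lemma integral_sq_gaussianReal_zero (v : ℝ≥0) : ∫ x, x ^ 2 ∂gaussianReal 0 v = v := by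
  have h := variance_fun_id_gaussianReal (μ := 0) (v := v)
  rw [variance_eq_integral measurable_id'.aemeasurable, integral_id_gaussianReal] at h
  simpa using h

lemma integral_max_zero_sq_gaussianReal_zero (v : ℝ≥0) :
    ∫ x, max x 0 ^ 2 ∂gaussianReal 0 v = v / 2 := by
  have hsymm : (gaussianReal 0 v).map (fun x ↦ -x) = gaussianReal 0 v := by
    simpa using gaussianReal_map_neg (μ := 0) (v := v)
  rw [integral_max_zero_sq_of_map_neg hsymm (memLp_id_gaussianReal 2).integrable_sq,
    integral_sq_gaussianReal_zero]

lemma integral_max_zero_gaussianReal_zero_one :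
    ∫ x, max x 0 ∂gaussianReal 0 1 = (√(2 * π))⁻¹ := by
  have hdensity : (fun x ↦ gaussianPDFReal 0 1 x • max x 0) =
      (Ioi 0).indicator fun x ↦ (√(2 * π))⁻¹ * (x * exp (-(1 / 2) * x ^ 2)) := by
    ext x
    rcases le_or_gt x 0 with hx | hx
    · simp [hx]
    · simp [hx, hx.le, gaussianPDFReal]
      ring_nf
  rw [integral_gaussianReal_eq_integral_smul one_ne_zero, hdensity,
    integral_indicator measurableSet_Ioi, integral_const_mul,
    integral_Ioi_mul_exp_neg_mul_sq one_half_pos]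
  norm_num

lemma variance_max_zero_gaussianReal_zero_one :
    Var[fun x ↦ max x 0; gaussianReal 0 1] = (π - 1) / (2 * π) := by
  have hmem : MemLp (fun x : ℝ ↦ max x 0) 2 (gaussianReal 0 1) :=
    (memLp_id_gaussianReal 2).mono (by fun_prop)
      (ae_of_all _ fun x ↦ by simpa using abs_max_sub_max_le_abs x 0 0)
  rw [variance_eq_sub hmem]
  simp only [Pi.pow_apply]
  rw [integral_max_zero_sq_gaussianReal_zero, integral_max_zero_gaussianReal_zero_one, inv_pow,
    sq_sqrt (by positivity)]
  field_simp
  norm_num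

lemma gaussianReal_zero_sq_eq_map (σ : ℝ≥0) :
    gaussianReal 0 (σ ^ 2) = (gaussianReal 0 1).map ((σ : ℝ) * ·) := by
  rw [gaussianReal_map_const_mul]
  congr 1
  · simp
  · ext; simp

lemma variance_max_zero_gaussianReal_zero_sq (σ : ℝ≥0) :
    Var[fun x ↦ max x 0; gaussianReal 0 (σ ^ 2)] =
      (σ : ℝ) ^ 2 * Var[fun x ↦ max x 0; gaussianReal 0 1] := by
  have hhom (x : ℝ) : max ((σ : ℝ) * x) 0 = σ * max x 0 := by
    rw [mul_max_of_nonneg _ _ σ.coe_nonneg, mul_zero]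
  rw [gaussianReal_zero_sq_eq_map, variance_map (by fun_prop) (by fun_prop)]
  simp only [Function.comp_def, hhom]
  exact variance_const_mul _ _ _

theorem relu_of_gaussian_variance_general
    {Ω : Type*} [MeasureSpace Ω]
    (σ : ℝ≥0) (h : Ω → ℝ) (h_meas : Measurable h)
    (h_law : Measure.map h ℙ = gaussianReal 0 (σ ^ 2)) :
    variance (fun ω => max (h ω) 0) ℙ
      = (Real.pi - 1) / (2 * Real.pi) * (σ : ℝ) ^ 2 := by
  calc variance (fun ω => max (h ω) 0) ℙ
      = Var[fun x ↦ max x 0; Measure.map h ℙ] :=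
        (variance_map (X := fun x ↦ max x 0) (by fun_prop) h_meas.aemeasurable).symm
    _ = (Real.pi - 1) / (2 * Real.pi) * (σ : ℝ) ^ 2 := by
      rw [h_law, variance_max_zero_gaussianReal_zero_sq, variance_max_zero_gaussianReal_zero_one,
        mul_comm]

/-- For `h ~ N(0, σ²)`, the variance of the ReLU output is
`Var[max(h, 0)] = ((π − 1)/(2π)) σ²`. -/
theorem relu_of_gaussian_variance
    {Ω : Type*} [MeasureSpace Ω] [IsProbabilityMeasure (ℙ : Measure Ω)]
    (σ : ℝ≥0) (h : Ω → ℝ) (h_meas : Measurable h)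
    (h_law : Measure.map h ℙ = gaussianReal 0 (σ ^ 2)) :
    variance (fun ω => max (h ω) 0) ℙ
      = (Real.pi - 1) / (2 * Real.pi) * (σ : ℝ) ^ 2 :=
  relu_of_gaussian_variance_general σ h h_meas h_law
end

section
/- Let x ∈ ℝ^n be fixed, let (w_{ij})_{1≤i≤N, 1≤j≤n} be i.i.d. N(0, σ_w²) and b_1, …, b_N i.i.d. N(0, σ_b²), all jointly independent. Then E[∑_{i=1}^N max(∑_{j=1}^n w_{ij} x_j + b_i, 0)²] = (σ_w² ‖x‖² + σ_b²) · N/2. That is, the expected squared norm of the output of one ReLU layer, conditional on the squared norm y = ‖x‖² of the previous layer, equals (σ_w² y + σ_b²) N/2. -/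
open MeasureTheory ProbabilityTheory
open scoped NNReal

/-!
Each pre-activation `∑ⱼ wᵢⱼ xⱼ + bᵢ` is a sum of independent centred Gaussians, hence is
`N(0, σw² ‖x‖² + σb²)`. A centred Gaussian `Z` is symmetric, so `E[max(Z, 0)²] = E[max(-Z, 0)²]`,
and the two add up to `E[Z²] = Var Z`: each neuron contributes half the variance.
-/

lemma max_zero_sq_add_max_neg_zero_sq (t : ℝ) : max t 0 ^ 2 + max (-t) 0 ^ 2 = t ^ 2 := by
  rcases le_total 0 t with h | h <;> simp [h]

namespace ProbabilityTheory

variable {Ω : Type*} {mΩ : MeasurableSpace Ω} {P : Measure Ω}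

lemma HasLaw.of_map_eq {𝓧 : Type*} {m𝓧 : MeasurableSpace 𝓧} {μ : Measure 𝓧} [NeZero μ]
    {X : Ω → 𝓧} (h : P.map X = μ) : HasLaw X μ P :=
  ⟨AEMeasurable.of_map_ne_zero (h ▸ NeZero.ne μ), h⟩

lemma iIndepFun.hasLaw_sum_gaussianReal [IsProbabilityMeasure P] {ι : Type*} {X : ι → Ω → ℝ}
    {m : ι → ℝ} {v : ι → ℝ≥0} (hind : iIndepFun X P)
    (hX : ∀ i, HasLaw (X i) (gaussianReal (m i) (v i)) P) (s : Finset ι) :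
    HasLaw (∑ i ∈ s, X i) (gaussianReal (∑ i ∈ s, m i) (∑ i ∈ s, v i)) P := by
  classical
  induction s using Finset.induction_on with
  | empty => exact ⟨aemeasurable_const, by simp [Pi.zero_def]⟩
  | insert a s ha ih =>
    rw [Finset.sum_insert ha, Finset.sum_insert ha, Finset.sum_insert ha,
      ← gaussianReal_conv_gaussianReal]
    exact (hind.indepFun_finsetSum_of_notMem₀ (fun i => (hX i).aemeasurable) ha).symm.hasLaw_add
      (hX a) ih

lemma hasLaw_sum_mul_add_gaussianReal [IsProbabilityMeasure P] {ι : Type*} [Fintype ι]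
    {W : ι → Ω → ℝ} {B : Ω → ℝ} (x : ι → ℝ) {σw σb : ℝ≥0}
    (hind : iIndepFun (Sum.elim W fun _ : Unit => B) P)
    (hW : ∀ j, HasLaw (W j) (gaussianReal 0 (σw ^ 2)) P)
    (hB : HasLaw B (gaussianReal 0 (σb ^ 2)) P) :
    HasLaw (fun ω => ∑ j, W j ω * x j + B ω)
      (gaussianReal 0 (Real.toNNReal ((σw : ℝ) ^ 2 * ∑ j, x j ^ 2 + (σb : ℝ) ^ 2))) P := by
  set Y : ι ⊕ Unit → Ω → ℝ := Sum.elim (fun j ω => W j ω * x j) fun _ => B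
  have hYind : iIndepFun Y P := by
    convert hind.comp (Sum.elim (fun j t => t * x j) fun _ => id)
      (by rintro (j | u); exacts [measurable_id.mul_const _, measurable_id]) using 1
    ext (j | u) <;> rfl
  have hY : ∀ k, HasLaw (Y k) (gaussianReal 0
      (Sum.elim (fun j => .mk (x j ^ 2) (sq_nonneg _) * σw ^ 2) (fun _ => σb ^ 2) k)) P := by
    rintro (j | u)
    · simpa [Y] using gaussianReal_mul_const (hW j) (x j)
    · exact hB
  convert hYind.hasLaw_sum_gaussianReal hY Finset.univ using 1
  · ext ω
    simp [Y, Fintype.sum_sum_type]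
  · rw [Fintype.sum_sum_type]
    congr 1
    · simp
    rw [← NNReal.coe_inj, Real.coe_toNNReal _ (by positivity)]
    simp [Finset.mul_sum, mul_comm]

lemma integrable_max_zero_sq_gaussianReal (μ : ℝ) (v : ℝ≥0) :
    Integrable (fun t : ℝ => max t 0 ^ 2) (gaussianReal μ v) :=
  (memLp_id_gaussianReal 2).integrable_sq.mono' (by fun_prop) (ae_of_all _ fun t => by
    rw [Real.norm_of_nonneg (sq_nonneg _), id]
    linarith [max_zero_sq_add_max_neg_zero_sq t, sq_nonneg (max (-t) 0)])

lemma integral_max_zero_sq_gaussianReal (v : ℝ≥0) :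
    ∫ t, max t 0 ^ 2 ∂gaussianReal 0 v = v / 2 := by
  have hsq : Integrable (fun t : ℝ => t ^ 2) (gaussianReal 0 v) :=
    (memLp_id_gaussianReal 2).integrable_sq
  have hrelu := integrable_max_zero_sq_gaussianReal 0 v
  have hsecond : ∫ t, t ^ 2 ∂gaussianReal 0 v = v := by
    rw [← variance_of_integral_eq_zero aemeasurable_id' integral_id_gaussianReal,
      variance_fun_id_gaussianReal]
  have hsymm : ∫ t, max (-t) 0 ^ 2 ∂gaussianReal 0 v = ∫ t, max t 0 ^ 2 ∂gaussianReal 0 v := by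
    conv_rhs => rw [← neg_zero, ← gaussianReal_map_neg]
    rw [integral_map (by fun_prop) (by fun_prop), neg_zero]
  have hcompl : ∫ t, max (-t) 0 ^ 2 ∂gaussianReal 0 v
      = ∫ t, t ^ 2 ∂gaussianReal 0 v - ∫ t, max t 0 ^ 2 ∂gaussianReal 0 v := by
    rw [← integral_sub hsq hrelu]
    congr 1 with t
    linarith [max_zero_sq_add_max_neg_zero_sq t]
  linarith

end ProbabilityTheory

theorem relu_layer_expected_squared_norm_general
    {Ω : Type*} [MeasureSpace Ω] [IsProbabilityMeasure (ℙ : Measure Ω)]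
    (n N : ℕ) (x : Fin n → ℝ) (σw σb : ℝ≥0)
    (w : Fin N → Fin n → Ω → ℝ) (b : Fin N → Ω → ℝ)
    (hw_law : ∀ i j, Measure.map (w i j) ℙ = gaussianReal 0 (σw ^ 2))
    (hb_law : ∀ i, Measure.map (b i) ℙ = gaussianReal 0 (σb ^ 2))
    (hindep : iIndepFun
      (Sum.elim (fun p : Fin N × Fin n => w p.1 p.2) b) ℙ) :
    ∫ ω, ∑ i, max (∑ j, w i j ω * x j + b i ω) 0 ^ 2 ∂ℙ
      = ((σw : ℝ) ^ 2 * ∑ j, x j ^ 2 + (σb : ℝ) ^ 2) * N / 2 := by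
  set c : ℝ := (σw : ℝ) ^ 2 * ∑ j, x j ^ 2 + (σb : ℝ) ^ 2
  have hrow (i : Fin N) :
      HasLaw (fun ω => ∑ j, w i j ω * x j + b i ω) (gaussianReal 0 c.toNNReal) ℙ := by
    refine hasLaw_sum_mul_add_gaussianReal x ?_ (fun j => .of_map_eq (hw_law i j))
      (.of_map_eq (hb_law i))
    convert hindep.precomp (g := Sum.map (Prod.mk i) fun _ : Unit => i)
      (Sum.map_injective.2 ⟨Prod.mk_right_injective i, fun _ _ _ => rfl⟩) using 1
    ext (j | u) <;> rfl
  have hint (i : Fin N) : Integrable (fun ω => max (∑ j, w i j ω * x j + b i ω) 0 ^ 2) ℙ :=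
    ((hrow i).map_eq ▸ integrable_max_zero_sq_gaussianReal 0 _).comp_aemeasurable
      (hrow i).aemeasurable
  have hexp (i : Fin N) : ∫ ω, max (∑ j, w i j ω * x j + b i ω) 0 ^ 2 ∂ℙ = c / 2 := by
    rw [← Function.comp_def (fun t : ℝ => max t 0 ^ 2), (hrow i).integral_comp (by fun_prop),
      integral_max_zero_sq_gaussianReal, Real.coe_toNNReal _ (by positivity)]
  rw [integral_finsetSum _ fun i _ => hint i, Finset.sum_congr rfl fun i _ => hexp i]
  simp only [Finset.sum_const, Finset.card_univ, Fintype.card_fin, nsmul_eq_mul]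
  ring

/-- The expected squared norm of the output of one ReLU layer with fixed input
`x`, i.i.d. Gaussian weights `w i j ~ N(0, σw²)` and biases `b i ~ N(0, σb²)`,
all jointly independent, equals `(σw² ‖x‖² + σb²) · N/2`. -/
theorem relu_layer_expected_squared_norm
    {Ω : Type*} [MeasureSpace Ω] [IsProbabilityMeasure (ℙ : Measure Ω)]
    (n N : ℕ) (x : Fin n → ℝ) (σw σb : ℝ≥0)
    (w : Fin N → Fin n → Ω → ℝ) (b : Fin N → Ω → ℝ)
    (hw_meas : ∀ i j, Measurable (w i j)) (hb_meas : ∀ i, Measurable (b i))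
    (hw_law : ∀ i j, Measure.map (w i j) ℙ = gaussianReal 0 (σw ^ 2))
    (hb_law : ∀ i, Measure.map (b i) ℙ = gaussianReal 0 (σb ^ 2))
    (hindep : iIndepFun
      (Sum.elim (fun p : Fin N × Fin n => w p.1 p.2) b) ℙ) :
    ∫ ω, ∑ i, max (∑ j, w i j ω * x j + b i ω) 0 ^ 2 ∂ℙ
      = ((σw : ℝ) ^ 2 * ∑ j, x j ^ 2 + (σb : ℝ) ^ 2) * N / 2 :=
  relu_layer_expected_squared_norm_general n N x σw σb w b hw_law hb_law hindep
end
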